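/- Let X be a real Hilbert space and let f : X → ℝ be locally Lipschitz at x̄ ∈ X with f(x̄) = 0, 0 ∉ ∂f(x̄) (Clarke subdifferential), and f approximately convex at x̄. Then there exist a point ȳ ∈ X, a radius t̄ > 0 and a number ε̄ > 0 with x̄ ∈ B(ȳ, 2t̄), such that the following invariance holds: for every x̃₁ ∈ B(ȳ, 2t̄) with f(x̃₁) > 0, every ε̃ ∈ (0, ε̄], and every finite family s^{(1)}, …, s^{(J)} ∈ ∂f(x̃₁), the polyhedron P := {x ∈ X : f(x̃₁) + ⟨s^{(j)}, x − x̃₁⟩ ≤ −ε̃ for all j ∈ {1,…,J}} is nonempty and the metric projection of x̃₁ onto P lies in B(ȳ, 2t̄). -/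

import Mathlib

open Filter Metric Set
open scoped Topology RealInnerProductSpace NNReal

variable {X : Type*} [NormedAddCommGroup X] [InnerProductSpace ℝ X] [CompleteSpace X]

/-- The Clarke (generalized) directional derivative
`f°(x; d) = limsup_{(y,t) → (x,0⁺)} (f(y + t d) − f(y))/t`. -/
noncomputable def clarkeDirDeriv (f : X → ℝ) (x d : X) : ℝ :=
  Filter.limsup (fun p : X × ℝ => (f (p.1 + p.2 • d) - f p.1) / p.2)
    ((𝓝 x) ×ˢ (𝓝[>] (0 : ℝ)))

/-- The Clarke (generalized) subdifferential
`∂f(x) = {s : ⟪s, d⟫ ≤ f°(x; d) for all d}`. -/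
def clarkeSubdiff (f : X → ℝ) (x : X) : Set X :=
  {s : X | ∀ d : X, ⟪s, d⟫ ≤ clarkeDirDeriv f x d}

def LocallyLipschitzAt (f : X → ℝ) (x : X) : Prop :=
  ∃ K : ℝ≥0, ∃ U ∈ 𝓝 x, LipschitzOnWith K f U

def ApproxConvexAt (f : X → ℝ) (xbar : X) : Prop :=
  ∀ ε > (0 : ℝ), ∃ δ > (0 : ℝ), ∀ x ∈ Metric.closedBall xbar δ, ∀ y ∈ Metric.closedBall xbar δ,
    ∀ s ∈ clarkeSubdiff f x, f x + ⟪s, y - x⟫ - ε * ‖y - x‖ ≤ f y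

/-!
Since `0 ∉ ∂f(xbar)`, some direction `d` has `f°(xbar; d) < 0`; local Lipschitz continuity turns
this limsup into a linear decrease `f (xbar + τ d) < a τ` with `a < 0` for all small `τ > 0`. Put
`ybar = xbar + τ d` and take the ball of radius `τ (‖d‖ + 1)` around it, with `τ` so small that
approximate convexity with tolerance `|a| / (2 (‖d‖ + 1))` holds on a ball around `xbar` containing
it. For a subgradient `s` at a point `x1` of the ball this gives
`f x1 + ⟪s, ybar - x1⟫ ≤ f ybar + |a| τ / 2 < a τ / 2`, so `ybar` lies in every polyhedron with
`ε̃ ≤ |a| τ / 2`. Projecting onto a convex set never increases the distance to its points, so the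
projection of `x1` is no farther from `ybar` than `x1` is.
-/

section

variable {E : Type*} [NormedAddCommGroup E] [InnerProductSpace ℝ E]

theorem LocallyLipschitzAt.isBoundedUnder_le_clarke_quotient {f : E → ℝ} {x : E}
    (hf : LocallyLipschitzAt f x) (d : E) :
    IsBoundedUnder (· ≤ ·) (𝓝 x ×ˢ 𝓝[>] (0 : ℝ))
      (fun p : E × ℝ => (f (p.1 + p.2 • d) - f p.1) / p.2) := by
  obtain ⟨K, U, hU, hK⟩ := hf
  have hshift : Tendsto (fun p : E × ℝ => p.1 + p.2 • d) (𝓝 x ×ˢ 𝓝[>] 0) (𝓝 x) := by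
    have hcont : Continuous fun p : E × ℝ => p.1 + p.2 • d := by fun_prop
    have h := hcont.tendsto (x, 0)
    rw [nhds_prod_eq] at h
    simpa using h.mono_left (Filter.prod_mono le_rfl nhdsWithin_le_nhds)
  refine ⟨K * ‖d‖, eventually_map.2 ?_⟩
  filter_upwards [tendsto_fst.eventually_mem hU, hshift.eventually_mem hU,
    tendsto_snd.eventually_mem self_mem_nhdsWithin] with p hp hpd ht
  have hlip := hK.dist_le_mul _ hpd _ hp
  rw [dist_self_add_left, norm_smul, Real.norm_of_nonneg ht.le] at hlip
  rw [div_le_iff₀ ht]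
  nlinarith [le_abs_self (f (p.1 + p.2 • d) - f p.1), Real.dist_eq (f (p.1 + p.2 • d)) (f p.1)]

theorem LocallyLipschitzAt.eventually_lt_of_clarkeDirDeriv_lt {f : E → ℝ} {x d : E} {a : ℝ}
    (hf : LocallyLipschitzAt f x) (ha : clarkeDirDeriv f x d < a) :
    ∀ᶠ t in 𝓝[>] (0 : ℝ), f (x + t • d) < f x + a * t := by
  have hquot := eventually_lt_of_limsup_lt ha (hf.isBoundedUnder_le_clarke_quotient d)
  have hline : Tendsto (fun t : ℝ => (x, t)) (𝓝[>] 0) (𝓝 x ×ˢ 𝓝[>] 0) :=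
    tendsto_const_nhds.prodMk tendsto_id
  filter_upwards [hline.eventually hquot, self_mem_nhdsWithin] with t ht ht0
  rw [div_lt_iff₀ ht0] at ht
  linarith

theorem LocallyLipschitzAt.exists_eventually_lt_of_zero_notMem {f : E → ℝ} {x : E}
    (hf : LocallyLipschitzAt f x) (h0 : (0 : E) ∉ clarkeSubdiff f x) :
    ∃ d : E, ∃ a < 0, ∀ᶠ t in 𝓝[>] (0 : ℝ), f (x + t • d) < f x + a * t := by
  obtain ⟨d, hd⟩ : ∃ d, clarkeDirDeriv f x d < 0 := by
    by_contra! hd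
    exact h0 fun d => by simpa using hd d
  exact ⟨d, clarkeDirDeriv f x d / 2, by linarith,
    hf.eventually_lt_of_clarkeDirDeriv_lt (by linarith)⟩

theorem convex_setOf_forall_add_inner_sub_le {ι : Type*} (c b : ℝ) (a : E) (s : ι → E) :
    Convex ℝ {x : E | ∀ j, c + ⟪s j, x - a⟫ ≤ b} := by
  intro x hx y hy α β hα hβ hαβ j
  have hsplit : c + ⟪s j, α • x + β • y - a⟫
      = α * (c + ⟪s j, x - a⟫) + β * (c + ⟪s j, y - a⟫) := by
    simp only [inner_sub_right, inner_add_right, real_inner_smul_right]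
    linear_combination (⟪s j, a⟫ - c) * hαβ
  calc c + ⟪s j, α • x + β • y - a⟫ ≤ α * b + β * b := by
        rw [hsplit]
        exact add_le_add (mul_le_mul_of_nonneg_left (hx j) hα)
          (mul_le_mul_of_nonneg_left (hy j) hβ)
    _ = b := by rw [← add_mul, hαβ, one_mul]

theorem Convex.dist_le_of_forall_dist_le {K : Set E} (hK : Convex ℝ K) {x p y : E}
    (hp : p ∈ K) (hmin : ∀ z ∈ K, dist x p ≤ dist x z) (hy : y ∈ K) :
    dist p y ≤ dist x y := by
  have : Nonempty K := ⟨⟨p, hp⟩⟩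
  have hinf : ‖x - p‖ = ⨅ w : K, ‖x - w‖ :=
    le_antisymm (le_ciInf fun w => by simpa only [dist_eq_norm] using hmin w w.2)
      (ciInf_le (f := fun w : K => ‖x - w‖) ⟨0, by rintro _ ⟨w, rfl⟩; positivity⟩ ⟨p, hp⟩)
  have hobtuse := (norm_eq_iInf_iff_real_inner_le_zero hK hp).1 hinf y hy
  have hexpand : ‖x - y‖ ^ 2 = ‖x - p‖ ^ 2 - 2 * ⟪x - p, y - p⟫ + ‖y - p‖ ^ 2 := by
    rw [← norm_sub_sq_real]; congr 2; abel
  rw [dist_comm p, dist_eq_norm, dist_eq_norm]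
  nlinarith [sq_nonneg ‖x - p‖, norm_nonneg (y - p), norm_nonneg (x - y)]

end

/-- **Invariance of a ball under a cutting-plane projection step.** Let `f` be locally
Lipschitz at `xbar` with `f xbar = 0`, `0 ∉ ∂f(xbar)`, and `f` approximately convex at
`xbar`. Then there are `ybar`, `tbar > 0` and `ε̄ > 0` with `xbar ∈ B(ybar, 2 tbar)` such
that for every `x̃₁ ∈ B(ybar, 2 tbar)` with `f x̃₁ > 0`, every `ε̃ ∈ (0, ε̄]` and every
finite family of subgradients `s j ∈ ∂f(x̃₁)`, the polyhedron
`P = {x : f x̃₁ + ⟪s j, x − x̃₁⟫ ≤ −ε̃ for all j}` is nonempty and the metric projection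
of `x̃₁` onto `P` lies in `B(ybar, 2 tbar)`. -/
theorem ball_invariance_of_projection_step
    (f : X → ℝ) (xbar : X)
    (hf : LocallyLipschitzAt f xbar)
    (hzero : f xbar = 0)
    (h0 : (0 : X) ∉ clarkeSubdiff f xbar)
    (hac : ApproxConvexAt f xbar) :
    ∃ (ybar : X) (tbar εb : ℝ), 0 < tbar ∧ 0 < εb ∧
      xbar ∈ Metric.closedBall ybar (2 * tbar) ∧
      ∀ x1 ∈ Metric.closedBall ybar (2 * tbar), 0 < f x1 →
        ∀ εt : ℝ, 0 < εt → εt ≤ εb →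
          ∀ (J : ℕ) (s : Fin J → X), (∀ j, s j ∈ clarkeSubdiff f x1) →
            (Set.Nonempty {x : X | ∀ j, f x1 + ⟪s j, x - x1⟫ ≤ -εt}) ∧
            ∀ x2 : X, x2 ∈ {x : X | ∀ j, f x1 + ⟪s j, x - x1⟫ ≤ -εt} →
              (∀ y ∈ {x : X | ∀ j, f x1 + ⟪s j, x - x1⟫ ≤ -εt},
                dist x1 x2 ≤ dist x1 y) →
              x2 ∈ Metric.closedBall ybar (2 * tbar) := by
  obtain ⟨d, a, ha, hdesc⟩ := hf.exists_eventually_lt_of_zero_notMem h0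
  set L := ‖d‖ + 1
  obtain ⟨δ, hδ, hconv⟩ := hac (-a / (2 * L)) (div_pos (neg_pos.2 ha) (by positivity))
  obtain ⟨τ, hfτ, hτ, hτδ⟩ := (hdesc.and
    (Ioo_mem_nhdsGT (show (0 : ℝ) < δ / (2 * L) by positivity))).exists
  rw [hzero, zero_add] at hfτ
  rw [lt_div_iff₀ (by positivity)] at hτδ
  have hdist : dist (xbar + τ • d) xbar ≤ τ * L := by
    rw [dist_self_add_left, norm_smul, Real.norm_of_nonneg hτ.le]; simp only [L]; nlinarith
  refine ⟨xbar + τ • d, τ * L / 2, -a * τ / 2, by positivity, by nlinarith, ?_, ?_⟩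
  · rw [mem_closedBall, dist_comm]; linarith
  intro x1 hx1 _ εt _ hεt J s hs
  rw [mul_div_cancel₀ _ two_ne_zero] at hx1 ⊢
  have hyδ : xbar + τ • d ∈ closedBall xbar δ := by rw [mem_closedBall]; nlinarith
  have hx1δ : x1 ∈ closedBall xbar δ := closedBall_subset_closedBall' (by nlinarith) hx1
  have hyP : xbar + τ • d ∈ {x : X | ∀ j, f x1 + ⟪s j, x - x1⟫ ≤ -εt} := fun j => by
    have hcut := hconv x1 hx1δ _ hyδ (s j) (hs j)
    rw [← dist_eq_norm, dist_comm] at hcut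
    have herr : -a / (2 * L) * dist x1 (xbar + τ • d) ≤ -a * τ / 2 := by
      rw [div_mul_eq_mul_div, div_le_div_iff₀ (by positivity) two_pos]
      nlinarith [mem_closedBall.1 hx1]
    linarith
  exact ⟨⟨_, hyP⟩, fun x2 hx2 hmin => mem_closedBall.2 <|
    ((convex_setOf_forall_add_inner_sub_le _ _ x1 s).dist_le_of_forall_dist_le hx2 hmin
      hyP).trans (mem_closedBall.1 hx1)⟩
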